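/- arXiv:2507.11556 — 3 statements merged into one kernel-verified Lean document; each statement's English description precedes it below -/
import Mathlib

section
/- For any continuous map f : S² → ℝ², there exists a point x ∈ S² such that f(x) = f(-x). -/
noncomputable abbrev S2 := Metric.sphere (0 : EuclideanSpace ℝ (Fin 3)) 1

/-!
If `f x ≠ f (-x)` everywhere, `g x = f x - f (-x)`, read in `ℂ`, is odd and has no zero. Pulled back
along inverse stereographic projection it gives a nonvanishing `G : ℂ → ℂ` that is odd on the unit
circle. As `ℂ` is simply connected, `G = h ^ 2` for a continuous `h`. On the circle
`h (-z) ^ 2 = (I * h z) ^ 2`, so by connectedness `h (-z) = c * h z` with one constant `c = ± I`;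
applying this twice gives `h z = c ^ 2 * h z = -h z`, which is absurd.
-/

open Complex Metric Set

theorem Convex.isSimplyConnected {E : Type*} [AddCommGroup E] [Module ℝ E] [TopologicalSpace E]
    [IsTopologicalAddGroup E] [ContinuousSMul ℝ E] {s : Set E} (hs : Convex ℝ s)
    (hne : s.Nonempty) : IsSimplyConnected s :=
  have := hs.contractibleSpace hne
  SimplyConnectedSpace.ofContractible s

theorem Complex.exists_eq_zero_of_apply_neg_eq_neg_on_sphere {G : ℂ → ℂ} (hG : Continuous G)
    (hodd : ∀ z ∈ sphere (0 : ℂ) 1, G (-z) = -G z) : ∃ z, G z = 0 := by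
  by_contra! hG₀
  obtain ⟨h, hh, hsq⟩ := exists_continuousOn_pow_eq (convex_univ.isSimplyConnected univ_nonempty)
    isOpen_univ hG.continuousOn (by simpa using hG₀) two_ne_zero
  rw [continuousOn_univ] at hh
  have hh₀ (z : ℂ) : h z ≠ 0 := fun h0 => hG₀ z (by rw [← hsq, h0]; simp)
  obtain ⟨c, hc, hneg⟩ : ∃ c : ℂ, c ^ 2 = -1 ∧ ∀ z ∈ sphere (0 : ℂ) 1, h (-z) = c * h z := by
    have hsq' : EqOn ((fun z => h (-z)) ^ 2) ((fun z => I * h z) ^ 2) (sphere 0 1) :=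
      fun z hz => by simp only [Pi.pow_apply, mul_pow, I_sq, hsq, hodd z hz]; ring
    rcases (isPreconnected_sphere (by simp) (0 : ℂ) 1).eq_or_eq_neg_of_sq_eq
      (hh.comp continuous_neg).continuousOn (continuous_const.mul hh).continuousOn hsq'
      (fun {z} _ => mul_ne_zero I_ne_zero (hh₀ z)) with hI | hI
    · exact ⟨I, I_sq, hI⟩
    · exact ⟨-I, by simp, fun z hz => by rw [neg_mul]; exact hI hz⟩
  have h1_eq_neg : h 1 = -h 1 :=
    calc h 1 = h (-(-1)) := by rw [neg_neg]
      _ = c * (c * h 1) := by rw [hneg _ (by simp), hneg 1 (by simp)]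
      _ = -h 1 := by linear_combination h 1 * hc
  exact hh₀ 1 (CharZero.eq_neg_self_iff.mp h1_eq_neg)

/-- Inverse stereographic projection from the south pole; it maps the unit circle onto the
equator. -/
noncomputable def inverseStereographic (z : ℂ) : S2 :=
  ⟨(1 + ‖z‖ ^ 2)⁻¹ • !₂[2 * z.re, 2 * z.im, 1 - ‖z‖ ^ 2], by
    have hz : ‖z‖ ^ 2 = z.re ^ 2 + z.im ^ 2 := by rw [Complex.sq_norm, normSq_apply]; ring
    have hsum : (2 * |z.re|) ^ 2 + (2 * |z.im|) ^ 2 + (1 - ‖z‖ ^ 2) ^ 2 = (1 + ‖z‖ ^ 2) ^ 2 := by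
      simp only [mul_pow, sq_abs]; linear_combination -4 * hz
    have hpos : 0 < 1 + ‖z‖ ^ 2 := by positivity
    rw [mem_sphere_zero_iff_norm, norm_smul, EuclideanSpace.norm_eq, Fin.sum_univ_three]
    simp [hsum, Real.sqrt_sq hpos.le, abs_of_pos hpos, hpos.ne']⟩

theorem continuous_inverseStereographic : Continuous inverseStereographic :=
  Continuous.subtype_mk (by fun_prop (disch := intro; positivity)) _

theorem inverseStereographic_neg {z : ℂ} (hz : z ∈ sphere (0 : ℂ) 1) :
    inverseStereographic (-z) = -inverseStereographic z := by
  rw [mem_sphere_zero_iff_norm] at hz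
  ext i
  fin_cases i <;> simp [inverseStereographic, hz]

theorem exists_eq_zero_of_apply_neg_eq_neg {g : S2 → ℂ} (hg : Continuous g)
    (hodd : ∀ x, g (-x) = -g x) : ∃ x, g x = 0 :=
  have ⟨z, hz⟩ := exists_eq_zero_of_apply_neg_eq_neg_on_sphere
    (hg.comp continuous_inverseStereographic)
    fun z hz => by simp only [Function.comp_apply, inverseStereographic_neg hz, hodd]
  ⟨_, hz⟩

theorem borsuk_ulam (f : S2 → EuclideanSpace ℝ (Fin 2)) (hf : Continuous f) :
    ∃ x : S2, f x = f (-x) := by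
  let e := orthonormalBasisOneI.repr.symm
  obtain ⟨x, hx⟩ := exists_eq_zero_of_apply_neg_eq_neg (g := fun x => e (f x - f (-x)))
    (by fun_prop) fun x => by simp only [neg_neg, ← map_neg, neg_sub]
  exact ⟨x, sub_eq_zero.mp (e.map_eq_zero_iff.mp hx)⟩
end

section
/- If F : S² → ℝ² is a continuous odd map (F(-x) = -F(x) for all x), then F has a zero: there exists x ∈ S² with F(x) = 0. -/
open Complex Metric

theorem exists_continuous_exp_comp_eq {A : Type*} [TopologicalSpace A] [SimplyConnectedSpace A]
    [LocallyPathConnectedSpace A] {g : A → ℂ} (hg : Continuous g) (hg0 : ∀ a, g a ≠ 0) :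
    ∃ G : A → ℂ, Continuous G ∧ ∀ a, exp (G a) = g a := by
  obtain ⟨a₀⟩ : Nonempty A := inferInstance
  obtain ⟨G, ⟨-, hG⟩, -⟩ := isCoveringMapOn_exp.existsUnique_continuousMap_lifts ⟨g, hg⟩
    (exp_log (hg0 a₀)) hg0
  exact ⟨G, G.continuous, congrFun hG⟩

theorem IsPreconnected.eq_of_exp_eq_const {X : Type*} [TopologicalSpace X] {S : Set X}
    (hS : IsPreconnected S) {d : X → ℂ} (hd : ContinuousOn d S) {c : ℂ}
    (hexp : ∀ x ∈ S, exp (d x) = c) {x y : X} (hx : x ∈ S) (hy : y ∈ S) : d x = d y := by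
  have hc : c ∈ ({0}ᶜ : Set ℂ) := by simp [← hexp x hx]
  have : DiscreteTopology (exp ⁻¹' {c}) := (isCoveringMapOn_exp c hc).discreteTopology_fiber
  exact hS.constant_of_mapsTo (isDiscrete_iff_discreteTopology.mpr this) hd hexp hx hy

theorem not_forall_exp_neg_eq_neg_exp {G : ℂ → ℂ} (hG : ContinuousOn G (sphere 0 1)) :
    ¬ ∀ z ∈ sphere (0 : ℂ) 1, exp (G (-z)) = -exp (G z) := by
  intro hodd
  set d : ℂ → ℂ := fun z ↦ G (-z) - G z
  have hd : ContinuousOn d (sphere 0 1) :=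
    (hG.comp continuous_neg.continuousOn fun z hz ↦ by simpa using hz).sub hG
  have hexp : ∀ z ∈ sphere (0 : ℂ) 1, exp (d z) = -1 := fun z hz ↦ by
    rw [exp_sub, hodd z hz, neg_div, div_self (exp_ne_zero _)]
  have h1 : (1 : ℂ) ∈ sphere 0 1 := by simp
  have hm1 : (-1 : ℂ) ∈ sphere 0 1 := by simp
  have hconst : d (-1) = d 1 :=
    (isConnected_sphere (by simp) 0 zero_le_one).isPreconnected.eq_of_exp_eq_const hd hexp hm1 h1
  have hzero : d 1 = 0 := by
    simp only [d, neg_neg] at hconst ⊢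
    linear_combination -hconst / 2
  have := hexp 1 h1
  rw [hzero, exp_zero] at this
  norm_num at this

theorem exists_map_neg_ne_neg_map {g : ℂ → ℂ} (hg : Continuous g) (hg0 : ∀ z, g z ≠ 0) :
    ∃ z ∈ sphere (0 : ℂ) 1, g (-z) ≠ -g z := by
  obtain ⟨G, hG, hGg⟩ := exists_continuous_exp_comp_eq hg hg0
  by_contra! hodd
  exact not_forall_exp_neg_eq_neg_exp hG.continuousOn fun z hz ↦ by simp only [hGg, hodd z hz]

noncomputable def toHemisphereVec (z : ℂ) : EuclideanSpace ℝ (Fin 3) :=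
  !₂[z.re, z.im, max 0 (1 - ‖z‖)]

theorem toHemisphereVec_ne_zero (z : ℂ) : toHemisphereVec z ≠ 0 := by
  intro h
  have hre : z.re = 0 := by simpa [toHemisphereVec] using congrArg (· 0) h
  have him : z.im = 0 := by simpa [toHemisphereVec] using congrArg (· 1) h
  have hz : z = 0 := Complex.ext hre him
  simpa [toHemisphereVec, hz] using congrArg (· 2) h

theorem continuous_toHemisphereVec : Continuous toHemisphereVec := by
  unfold toHemisphereVec
  fun_prop

theorem toHemisphereVec_neg {z : ℂ} (hz : ‖z‖ = 1) :
    toHemisphereVec (-z) = -toHemisphereVec z := by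
  ext i
  fin_cases i <;> simp [toHemisphereVec, hz]

noncomputable def toHemisphere (z : ℂ) : S2 :=
  ⟨‖toHemisphereVec z‖⁻¹ • toHemisphereVec z, by
    simp [norm_smul, toHemisphereVec_ne_zero]⟩

theorem continuous_toHemisphere : Continuous toHemisphere :=
  .subtype_mk (.smul (.inv₀ (continuous_norm.comp continuous_toHemisphereVec)
    fun z ↦ norm_ne_zero_iff.mpr (toHemisphereVec_ne_zero z)) continuous_toHemisphereVec) _

theorem toHemisphere_neg {z : ℂ} (hz : ‖z‖ = 1) : toHemisphere (-z) = -toHemisphere z := by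
  ext1
  simp [toHemisphere, toHemisphereVec_neg hz, coe_neg_sphere]

theorem odd_map_has_zero (F : S2 → EuclideanSpace ℝ (Fin 2)) (hF : Continuous F)
    (hodd : ∀ x : S2, F (-x) = -F x) : ∃ x : S2, F x = 0 := by
  by_contra! hF0
  set e := Complex.orthonormalBasisOneI.repr.symm
  obtain ⟨z, hz, hne⟩ := exists_map_neg_ne_neg_map (g := fun z ↦ e (F (toHemisphere z)))
    (e.continuous.comp (hF.comp continuous_toHemisphere)) (fun z ↦ by simpa using hF0 _)
  exact hne (by simp [toHemisphere_neg (mem_sphere_zero_iff_norm.mp hz), hodd])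
end

section
/- If f : S² → ℝ² is continuous and injective on some pair {x, -x} in the sense that f(x) ≠ f(-x) for all x ∈ S², then a contradiction follows; i.e., there is no continuous f : S² → ℝ² with f(x) ≠ f(-x) for every x ∈ S². -/
open Complex Function
open scoped Real

theorem ContinuousMap.exists_exp_eq {A : Type*} [TopologicalSpace A] [SimplyConnectedSpace A]
    [LocallyPathConnectedSpace A] (F : C(A, ℂ)) (hF : ∀ a, F a ≠ 0) :
    ∃ L : C(A, ℂ), ∀ a, exp (L a) = F a := by
  obtain ⟨a₀⟩ := (inferInstance : Nonempty A)
  obtain ⟨L, -, hL⟩ := (isCoveringMapOn_exp.existsUnique_continuousMap_lifts F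
    (exp_log (hF a₀)) hF).exists
  exact ⟨L, congrFun hL⟩

theorem Complex.im_ne_zero_of_exp_eq_neg_one {z : ℂ} (h : exp z = -1) : z.im ≠ 0 := by
  intro him
  have hre : Real.exp z.re = -1 := by simpa [exp_re, him] using congrArg re h
  linarith [Real.exp_pos z.re]

theorem Continuous.exists_eq_zero_of_antiperiodic {f : ℝ → ℝ} (hf : Continuous f) {c : ℝ}
    (h : Antiperiodic f c) : ∃ t, f t = 0 := by
  have h0 : (0 : ℝ) ∈ Set.uIcc (f 0) (f c) := by
    rw [h.eq, Set.mem_uIcc]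
    rcases le_total (f 0) 0 with h | h
    · exact Or.inl ⟨h, by linarith⟩
    · exact Or.inr ⟨by linarith, h⟩
  obtain ⟨t, -, ht⟩ := intermediate_value_uIcc hf.continuousOn h0
  exact ⟨t, ht⟩

theorem Continuous.not_antiperiodic_of_exp_eq_neg_one {d : ℝ → ℂ} (hd : Continuous d)
    (hexp : ∀ t, exp (d t) = -1) (c : ℝ) : ¬ Antiperiodic d c := by
  intro h
  obtain ⟨t, ht⟩ := (continuous_im.comp hd).exists_eq_zero_of_antiperiodic
    (fun t => by simp [h t] : Antiperiodic (fun t => (d t).im) c)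
  exact im_ne_zero_of_exp_eq_neg_one (hexp t) ht

theorem not_forall_odd_on_circle_of_ne_zero {F : ℂ → ℂ} (hF : Continuous F)
    (hF0 : ∀ z, F z ≠ 0) : ¬ ∀ z, ‖z‖ = 1 → F (-z) = -F z := by
  intro hodd
  obtain ⟨L, hL⟩ := ContinuousMap.exists_exp_eq ⟨F, hF⟩ hF0
  let c : ℝ → ℂ := fun t => exp (t * I)
  have hc_half : ∀ t, c (t + π) = -c t := fun t => by
    simp only [c, ofReal_add, add_mul, exp_add, exp_pi_mul_I, mul_neg_one]
  let d : ℝ → ℂ := fun t => L (c (t + π)) - L (c t)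
  have hd : Continuous d := by fun_prop
  refine hd.not_antiperiodic_of_exp_eq_neg_one (fun t => ?_) π (fun t => ?_)
  · simp only [d, exp_sub, hL, ContinuousMap.coe_mk, hc_half]
    rw [hodd (c t) (norm_exp_ofReal_mul_I t), neg_div, div_self (hF0 _)]
  · simp only [d, hc_half, neg_neg, neg_sub]

noncomputable def hemisphereVector (z : ℂ) : EuclideanSpace ℝ (Fin 3) :=
  !₂[z.re, z.im, 1 - ‖z‖ ^ 2]

theorem hemisphereVector_ne_zero (z : ℂ) : hemisphereVector z ≠ 0 := by
  intro h
  have hre : z.re = 0 := congrArg (· 0) h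
  have him : z.im = 0 := congrArg (· 1) h
  have hz : 1 - ‖z‖ ^ 2 = 0 := congrArg (· 2) h
  have hz0 : z = 0 := Complex.ext hre him
  simp [hz0] at hz

theorem hemisphereVector_neg {z : ℂ} (hz : ‖z‖ = 1) :
    hemisphereVector (-z) = -hemisphereVector z := by
  ext i
  fin_cases i <;> simp [hemisphereVector, hz]

noncomputable def toUpperHemisphere (z : ℂ) : S2 :=
  ⟨‖hemisphereVector z‖⁻¹ • hemisphereVector z, by simp [norm_smul, hemisphereVector_ne_zero]⟩

theorem continuous_toUpperHemisphere : Continuous toUpperHemisphere := by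
  have hv : Continuous hemisphereVector := by unfold hemisphereVector; fun_prop
  refine .subtype_mk (.smul (hv.norm.inv₀ fun z => ?_) hv) _
  exact norm_ne_zero_iff.mpr (hemisphereVector_ne_zero z)

theorem toUpperHemisphere_neg {z : ℂ} (hz : ‖z‖ = 1) :
    toUpperHemisphere (-z) = -toUpperHemisphere z := by
  ext1
  simp [toUpperHemisphere, hemisphereVector_neg hz]

theorem not_forall_odd_on_sphere_of_ne_zero {F : S2 → ℂ} (hF : Continuous F)
    (hF0 : ∀ x, F x ≠ 0) : ¬ ∀ x, F (-x) = -F x := fun hodd =>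
  not_forall_odd_on_circle_of_ne_zero (hF.comp continuous_toUpperHemisphere) (fun _ => hF0 _)
    fun z hz => by simp only [comp_apply, toUpperHemisphere_neg hz, hodd]

theorem no_antipodal_injective_map :
    ¬ ∃ f : S2 → EuclideanSpace ℝ (Fin 2), Continuous f ∧ ∀ x : S2, f x ≠ f (-x) := by
  rintro ⟨f, hf, hne⟩
  let e := Complex.orthonormalBasisOneI.repr.symm
  refine not_forall_odd_on_sphere_of_ne_zero (F := fun x => e (f x - f (-x))) (by fun_prop)
    (fun x => ?_) (fun x => ?_)
  · simpa [sub_eq_zero] using hne x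
  · simp
end
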